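/- arXiv:2602.12821 — 4 statements merged into one kernel-verified Lean document; each statement's English description precedes it below -/
import Mathlib

section
/- Let f : X → ℝ ∪ {±∞} be a convex function with nonempty domain whose lower semicontinuous hull cl f is improper (takes the value −∞ somewhere). Then the closure of the positive part f⁺ := max{f, 0} equals the positive part of cl f, and both equal the indicator function of dom(cl f): cl(f⁺) = (cl f)⁺ = I_{dom(cl f)}. -/
open Set
open scoped RealInnerProductSpace Pointwise

noncomputable section

abbrev E (n : ℕ) := EuclideanSpace ℝ (Fin n)

/-- Recession cone with the convention `[∅]_∞ = {0}`. -/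
def recCone {X : Type*} [NormedAddCommGroup X] [InnerProductSpace ℝ X] (C : Set X) : Set X :=
  {d | (C = ∅ ∧ d = 0) ∨ (C.Nonempty ∧ ∀ a ∈ C, a + d ∈ C)}

/-- Closed convex hull. -/
def clco {X : Type*} [NormedAddCommGroup X] [InnerProductSpace ℝ X] (A : Set X) : Set X :=
  closure (convexHull ℝ A)

/-- ε-normal set to `C` at `x`. -/
def eNormal {X : Type*} [NormedAddCommGroup X] [InnerProductSpace ℝ X]
    (C : Set X) (x : X) (ε : ℝ) : Set X :=
  {v | ∀ y ∈ C, ⟪v, y - x⟫ ≤ ε}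

/-- ε-subdifferential of an extended-real-valued function, empty unless `f x` is finite. -/
def eSubdiff {X : Type*} [NormedAddCommGroup X] [InnerProductSpace ℝ X]
    (f : X → EReal) (x : X) (ε : ℝ) : Set X :=
  {v | (∃ r : ℝ, f x = (r : EReal)) ∧
    ∀ y, ((⟪v, y - x⟫ : ℝ) : EReal) + f x ≤ f y + (ε : EReal)}

/-- Convexity of an extended-real-valued function, via its epigraph. -/
def EpiConvex {X : Type*} [NormedAddCommGroup X] [InnerProductSpace ℝ X]
    (f : X → EReal) : Prop :=
  Convex ℝ {p : X × ℝ | f p.1 ≤ (p.2 : EReal)}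

/-- Properness of an extended-real-valued function. -/
def EProper {X : Type*} (f : X → EReal) : Prop :=
  (∀ y, f y ≠ ⊥) ∧ ∃ y, f y ≠ ⊤

/-- Lower semicontinuous (closed) hull: supremum of all lsc minorants. -/
def clHull {X : Type*} [TopologicalSpace X] (f : X → EReal) : X → EReal :=
  fun x => sSup {r : EReal | ∃ g : X → EReal, LowerSemicontinuous g ∧ g ≤ f ∧ g x = r}

open Classical in
/-- Indicator function with values in `EReal`. -/
def eInd {X : Type*} (C : Set X) (x : X) : EReal := if x ∈ C then 0 else ⊤

/-- Support function of a set. -/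
def suppFn {X : Type*} [NormedAddCommGroup X] [InnerProductSpace ℝ X]
    (A : Set X) (x : X) : EReal := ⨆ a ∈ A, ((⟪a, x⟫ : ℝ) : EReal)

/-!
The closed hull `cl f` is the pointwise liminf of `f`, so its epigraph is the closure of the
epigraph of `f`. Since `max · 0` is monotone and continuous it commutes with this liminf, which
gives `cl (f⁺) = (cl f)⁺` for every `f`. If moreover `f` is convex and `cl f x₀ = ⊥`, the closed
convex epigraph of `cl f` contains the whole vertical line over `x₀`; combining it with any point
`(x, r)` of the epigraph and letting the weight of the line tend to zero puts every `(x, c)` in the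
epigraph. So `cl f` only takes the values `⊥` and `⊤`, and `(cl f)⁺` is the indicator of its domain.
-/

open Filter Topology

section Liminf

variable {X γ : Type*} [TopologicalSpace X] [CompleteLinearOrder γ]

theorem lowerSemicontinuous_liminf_nhds (f : X → γ) :
    LowerSemicontinuous fun x => liminf f (𝓝 x) := by
  intro x c hc
  change c < liminf f (𝓝 x) at hc
  rw [liminf_eq, lt_sSup_iff] at hc
  obtain ⟨a, ha, hca⟩ := hc
  filter_upwards [Eventually.eventually_nhds ha] with z hz
  exact hca.trans_le (le_liminf_of_le (by isBoundedDefault) hz)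

theorem liminf_nhds_le_self (f : X → γ) (x : X) : liminf f (𝓝 x) ≤ f x :=
  liminf_le_of_frequently_le' fun h => h.self_of_nhds le_rfl

end Liminf

section ClosedHull

variable {X : Type*} [TopologicalSpace X]

theorem clHull_eq_liminf (f : X → EReal) (x : X) : clHull f x = liminf f (𝓝 x) := by
  refine le_antisymm (sSup_le ?_) (le_sSup ⟨_, lowerSemicontinuous_liminf_nhds f,
    liminf_nhds_le_self f, rfl⟩)
  rintro r ⟨g, hg, hgf, rfl⟩
  exact (hg.le_liminf x).trans (liminf_le_liminf (Eventually.of_forall hgf))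

theorem lowerSemicontinuous_clHull (f : X → EReal) : LowerSemicontinuous (clHull f) := by
  simpa only [← clHull_eq_liminf] using lowerSemicontinuous_liminf_nhds f

theorem clHull_le (f : X → EReal) : clHull f ≤ f := fun x =>
  clHull_eq_liminf f x ▸ liminf_nhds_le_self f x

theorem clHull_max_const (f : X → EReal) (c : EReal) (x : X) :
    clHull (fun y => max (f y) c) x = max (clHull f x) c := by
  simp only [clHull_eq_liminf]
  exact ((monotone_id.max monotone_const).map_liminf_of_continuousAt f
    (continuous_id.max continuous_const).continuousAt).symm

theorem setOf_clHull_le_eq_closure (f : X → EReal) :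
    {p : X × ℝ | clHull f p.1 ≤ p.2} = closure {p : X × ℝ | f p.1 ≤ p.2} := by
  apply Subset.antisymm
  · rintro ⟨x, t⟩ (hxt : clHull f x ≤ t)
    have above : ∀ s > t, (x, s) ∈ closure {p : X × ℝ | f p.1 ≤ p.2} := by
      intro s hs
      have hfreq : ∃ᶠ y in 𝓝 x, f y < s := frequently_lt_of_liminf_lt (by isBoundedDefault)
        ((clHull_eq_liminf f x ▸ hxt).trans_lt (EReal.coe_lt_coe_iff.mpr hs))
      exact mem_closure_iff_frequently.mpr ((continuous_id.prodMk continuous_const).tendsto x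
        |>.frequently (hfreq.mono fun y hy => hy.le))
    have hclosed : IsClosed {s : ℝ | (x, s) ∈ closure {p : X × ℝ | f p.1 ≤ p.2}} :=
      isClosed_closure.preimage (continuous_const.prodMk continuous_id)
    exact hclosed.closure_subset_iff.mpr above ((closure_Ioi t).symm ▸ self_mem_Ici)
  · have hclosed : IsClosed {p : X × ℝ | clHull f p.1 ≤ p.2} :=
      (lowerSemicontinuous_clHull f).isClosed_epigraph.preimage
        (continuous_fst.prodMk (continuous_coe_real_ereal.comp continuous_snd))
    exact closure_minimal (fun p hp => (clHull_le f p.1).trans hp) hclosed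

end ClosedHull

section Convex

variable {X : Type*} [AddCommGroup X] [Module ℝ X] [TopologicalSpace X]

theorem Convex.mk_mem_of_isClosed_of_forall_mk_mem [ContinuousAdd X] [ContinuousSMul ℝ X]
    {C : Set (X × ℝ)} (hC : Convex ℝ C) (hCc : IsClosed C) {x₀ x : X} {r : ℝ}
    (hx₀ : ∀ t, (x₀, t) ∈ C) (hx : (x, r) ∈ C) (c : ℝ) : (x, c) ∈ C := by
  have hmem : ∀ l ∈ Ioo (0 : ℝ) 1, (l • x₀ + (1 - l) • x, c) ∈ C := by
    rintro l ⟨hl₀, hl₁⟩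
    convert hC (hx₀ ((c - (1 - l) * r) / l)) hx hl₀.le (sub_nonneg.mpr hl₁.le)
      (add_sub_cancel _ _) using 1
    refine Prod.ext rfl ?_
    simp only [Prod.smul_mk, Prod.mk_add_mk, smul_eq_mul]
    field_simp
    ring
  have htend : Tendsto (fun l : ℝ => (l • x₀ + (1 - l) • x, c)) (𝓝[>] 0) (𝓝 (x, c)) := by
    have hcont : Continuous fun l : ℝ => (l • x₀ + (1 - l) • x, c) := by fun_prop
    simpa using (hcont.tendsto 0).mono_left nhdsWithin_le_nhds
  exact hCc.mem_of_tendsto htend (mem_of_superset (Ioo_mem_nhdsGT one_pos) hmem)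

theorem clHull_eq_bot_of_ne_top [IsTopologicalAddGroup X] [ContinuousSMul ℝ X] {f : X → EReal}
    (hf : Convex ℝ {p : X × ℝ | f p.1 ≤ p.2}) {x₀ x : X} (hx₀ : clHull f x₀ = ⊥)
    (hx : clHull f x ≠ ⊤) : clHull f x = ⊥ := by
  have hepi := setOf_clHull_le_eq_closure f
  have hline : ∀ c : ℝ, (x, c) ∈ {p : X × ℝ | clHull f p.1 ≤ p.2} := by
    rw [hepi]
    refine hf.closure.mk_mem_of_isClosed_of_forall_mk_mem isClosed_closure (x₀ := x₀)
      (r := (clHull f x).toReal) (fun t => ?_) ?_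
    · simp [← hepi, hx₀]
    · simpa [← hepi] using EReal.le_coe_toReal hx
  refine (EReal.eq_bot_iff_forall_lt _).mpr fun c => (hline (c - 1)).trans_lt ?_
  exact EReal.coe_lt_coe_iff.mpr (by linarith)

end Convex

theorem stmt3_general {n : ℕ} (f : E n → EReal) (hconv : EpiConvex f)
    (himp : ∃ x, clHull f x = ⊥) :
    clHull (fun x => max (f x) 0) = (fun x => max (clHull f x) 0) ∧
    (fun x => max (clHull f x) 0) = eInd {x | clHull f x ≠ ⊤} := by
  obtain ⟨x₀, hx₀⟩ := himp
  refine ⟨funext (clHull_max_const f 0), funext fun x => ?_⟩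
  by_cases hx : clHull f x = ⊤
  · simp [eInd, hx]
  · simp [eInd, clHull_eq_bot_of_ne_top hconv hx₀ hx]

/-- if `f` is convex with nonempty domain and `cl f` is improper, then
`cl(f⁺) = (cl f)⁺ = I_{dom (cl f)}`. -/
theorem stmt3 {n : ℕ} (f : E n → EReal) (hconv : EpiConvex f)
    (hdom : ∃ x, f x ≠ ⊤) (himp : ∃ x, clHull f x = ⊥) :
    clHull (fun x => max (f x) 0) = (fun x => max (clHull f x) 0) ∧
    (fun x => max (clHull f x) 0) = eInd {x | clHull f x ≠ ⊤} :=
  stmt3_general f hconv himp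
end
end

section
/- (Restriction of recession cones to finite-dimensional subspaces.) Let f_t ∈ Γ₀(X), t ∈ T, with f = sup_t f_t, ε > 0, x ∈ dom f, and L a finite-dimensional subspace containing x and all the domains dom f_t. Let g_t be the restriction of f_t to L. Then the sets A = ⋃_t ∂_ε f_t(x) ⊆ X* and B = ⋃_t ∂_ε g_t(x) ⊆ L* are nonempty, and every element of the recession cone of cl co(B) is the restriction to L of some element of the recession cone of cl co(A). -/
open Set
open scoped RealInnerProductSpace Pointwise

noncomputable section

/-!
An ε-subgradient of `f_t` projects orthogonally onto an ε-subgradient of `g_t`, and since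
`dom f_t ⊆ L`, an ε-subgradient of `g_t` plus any vector of `Lᗮ` is one of `f_t`; so every
translate of `cl co B` by a vector of `Lᗮ` lies in `cl co A`. If `w` is a recession direction of
`cl co B` and `a ∈ A` has projection `P a`, then `a + w = (P a + w) + (a - P a)` with
`P a + w ∈ cl co B` and `a - P a ∈ Lᗮ`, so `a + w ∈ cl co A`; closedness and convexity extend
this from `A` to `cl co A`. Nonemptiness comes from separating `(x, f x - ε)` from the closed
convex epigraph.
-/

open Set InnerProductSpace
open scoped RealInnerProductSpace

lemma isClosed_realEpigraph {X : Type*} [TopologicalSpace X] {f : X → EReal}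
    (hf : LowerSemicontinuous f) : IsClosed {p : X × ℝ | f p.1 ≤ (p.2 : EReal)} :=
  hf.isClosed_epigraph.preimage
    (continuous_fst.prodMk (continuous_coe_real_ereal.comp continuous_snd))

lemma ContinuousLinearMap.apply_prod_real {M : Type*} [TopologicalSpace M] [AddCommGroup M]
    [Module ℝ M] (φ : M × ℝ →L[ℝ] ℝ) (y : M) (s : ℝ) :
    φ (y, s) = φ (y, 0) + s * φ (0, 1) := by
  have hys : (y, s) = (y, (0 : ℝ)) + s • ((0 : M), (1 : ℝ)) := by simp
  rw [hys, map_add, map_smul, smul_eq_mul]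

section InnerProductSpace

variable {X : Type*} [NormedAddCommGroup X] [InnerProductSpace ℝ X]

lemma subset_clco (A : Set X) : A ⊆ clco A :=
  (subset_convexHull ℝ A).trans subset_closure

lemma mem_recCone_iff {C : Set X} (hC : C.Nonempty) {d : X} :
    d ∈ recCone C ↔ ∀ a ∈ C, a + d ∈ C := by
  simp [recCone, hC, hC.ne_empty]

lemma mapsTo_clco {Y : Type*} [NormedAddCommGroup Y] [InnerProductSpace ℝ Y]
    (g : X →L[ℝ] Y) (u : Y) {A : Set X} {C : Set Y}
    (h : MapsTo (fun a => g a + u) A (clco C)) : MapsTo (fun a => g a + u) (clco A) (clco C) := by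
  simp only [clco, ← closedConvexHull_eq_closure_convexHull] at h ⊢
  exact closedConvexHull_min h
    (((convex_closedConvexHull).translate_preimage_left u).linear_preimage (g : X →ₗ[ℝ] Y))
    (isClosed_closedConvexHull.preimage (by fun_prop))

theorem eSubdiff_nonempty [CompleteSpace X] {f : X → EReal} (hlsc : LowerSemicontinuous f)
    (hbot : ∀ y, f y ≠ ⊥) (hconv : EpiConvex f) {ε : ℝ} (hε : 0 < ε) {x : X} (hx : f x ≠ ⊤) :
    (eSubdiff f x ε).Nonempty := by
  obtain ⟨r, hr⟩ : ∃ r : ℝ, f x = r := ⟨(f x).toReal, (EReal.coe_toReal hx (hbot x)).symm⟩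
  have hnotin : (x, r - ε) ∉ {p : X × ℝ | f p.1 ≤ (p.2 : EReal)} := fun h => by
    have hle : (r : EReal) ≤ ((r - ε : ℝ) : EReal) := hr ▸ h
    linarith [EReal.coe_le_coe_iff.1 hle]
  obtain ⟨φ, u, hφx, hφepi⟩ :=
    geometric_hahn_banach_point_closed hconv (isClosed_realEpigraph hlsc) hnotin
  set c := φ (0, 1)
  set ψ : X → ℝ := fun y => φ (y, 0)
  have hsep : ∀ y (s : ℝ), f y ≤ s → u < ψ y + s * c := fun y s h =>
    φ.apply_prod_real y s ▸ hφepi (y, s) h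
  rw [φ.apply_prod_real] at hφx
  have hc : 0 < c := by
    have hεc : 0 < ε * c := by linarith [hsep x r hr.le]
    exact pos_of_mul_pos_right hεc hε.le
  obtain ⟨v, hv⟩ : ∃ v : X, ∀ y, ⟪v, y⟫ = -c⁻¹ * ψ y :=
    ⟨-c⁻¹ • (toDual ℝ X).symm (φ.comp (ContinuousLinearMap.inl ℝ X ℝ)),
      fun y => by rw [real_inner_smul_left, toDual_symm_apply]; rfl⟩
  refine ⟨v, ⟨r, hr⟩, fun y => ?_⟩
  rcases eq_or_ne (f y) ⊤ with hy | hy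
  · simp [hy]
  obtain ⟨s, hs⟩ : ∃ s : ℝ, f y = s := ⟨(f y).toReal, (EReal.coe_toReal hy (hbot y)).symm⟩
  have hgap : ψ x - ψ y ≤ c * (s + ε - r) := by linarith [hsep y s hs.le]
  have hinner : ⟪v, y - x⟫ = c⁻¹ * (ψ x - ψ y) := by
    rw [inner_sub_right, hv, hv]
    ring
  rw [hr, hs, hinner, ← EReal.coe_add, ← EReal.coe_add, EReal.coe_le_coe_iff]
  linarith [(inv_mul_le_iff₀ hc).2 hgap]

variable {L : Submodule ℝ X}

theorem orthogonalProjectionOnto_mem_eSubdiff [L.HasOrthogonalProjection] {f : X → EReal}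
    {x : X} (hxL : x ∈ L) {ε : ℝ} {v : X} (hv : v ∈ eSubdiff f x ε) :
    L.orthogonalProjectionOnto v ∈ eSubdiff (fun y : L => f y) ⟨x, hxL⟩ ε := by
  obtain ⟨hfx, hsub⟩ := hv
  refine ⟨hfx, fun y => ?_⟩
  have horth := L.starProjection_inner_eq_zero v ((y : X) - x) (sub_mem y.2 hxL)
  rw [inner_sub_left] at horth
  have hinner : ⟪L.orthogonalProjectionOnto v, y - ⟨x, hxL⟩⟫ = ⟪v, (y : X) - x⟫ := by
    rw [Submodule.coe_inner]
    simp only [Submodule.coe_orthogonalProjectionOnto_apply, AddSubgroupClass.coe_sub]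
    linarith
  rw [hinner]
  exact hsub y

theorem add_mem_eSubdiff_of_mem_orthogonal {f : X → EReal} {x : X} (hxL : x ∈ L)
    (hdom : {y | f y ≠ ⊤} ⊆ (L : Set X)) {ε : ℝ} {w : L}
    (hw : w ∈ eSubdiff (fun y : L => f y) ⟨x, hxL⟩ ε) {u : X} (hu : u ∈ Lᗮ) :
    (w : X) + u ∈ eSubdiff f x ε := by
  obtain ⟨hfx, hsub⟩ := hw
  refine ⟨hfx, fun y => ?_⟩
  rcases eq_or_ne (f y) ⊤ with hy | hy
  · simp [hy]
  have hyL : y ∈ L := hdom hy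
  have hinner : ⟪(w : X) + u, y - x⟫ = ⟪w, (⟨y, hyL⟩ : L) - ⟨x, hxL⟩⟫ := by
    rw [inner_add_left, real_inner_comm (y - x) u, hu _ (sub_mem hyL hxL), add_zero,
      Submodule.coe_inner]
    rfl
  rw [hinner]
  exact hsub ⟨y, hyL⟩

theorem coe_mem_recCone_clco [L.HasOrthogonalProjection] {A : Set X} {B : Set L}
    (hB : B.Nonempty) (hproj : ∀ a ∈ A, L.orthogonalProjectionOnto a ∈ B)
    (hlift : ∀ b ∈ B, ∀ u ∈ Lᗮ, (b : X) + u ∈ A) {w : L} (hw : w ∈ recCone (clco B)) :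
    (w : X) ∈ recCone (clco A) := by
  obtain ⟨b₀, hb₀⟩ := hB
  have hA : A.Nonempty := ⟨b₀ + 0, hlift b₀ hb₀ 0 (zero_mem _)⟩
  rw [mem_recCone_iff ⟨b₀, subset_clco B hb₀⟩] at hw
  rw [mem_recCone_iff (hA.mono (subset_clco A))]
  have hlift_clco : ∀ u ∈ Lᗮ, MapsTo (fun b => L.subtypeL b + u) (clco B) (clco A) :=
    fun u hu => mapsTo_clco _ _ fun b hb => subset_clco A (hlift b hb u hu)
  refine mapsTo_clco (ContinuousLinearMap.id ℝ X) (w : X) fun a ha => ?_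
  have hmem := hlift_clco (a - L.starProjection a) (L.sub_starProjection_mem_orthogonal a)
    (hw _ (subset_clco B (hproj a ha)))
  convert hmem using 1
  simp only [ContinuousLinearMap.id_apply, Submodule.subtypeL_apply, Submodule.coe_add,
    Submodule.coe_orthogonalProjectionOnto_apply]
  abel

end InnerProductSpace

theorem stmt11_general {n : ℕ} {T : Type*} [Nonempty T] (f : T → E n → EReal)
    (hlsc : ∀ t, LowerSemicontinuous (f t)) (hprop : ∀ t, EProper (f t))
    (hconv : ∀ t, EpiConvex (f t)) (ε : ℝ) (hε : 0 < ε)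
    (x : E n) (hx : (⨆ t, f t x) ≠ ⊤)
    (L : Submodule ℝ (E n)) (hxL : x ∈ L)
    (hdomL : ∀ t, {y | f t y ≠ ⊤} ⊆ (L : Set (E n))) :
    (⋃ t, eSubdiff (f t) x ε).Nonempty ∧
    (⋃ t, eSubdiff (fun y : L => f t y) ⟨x, hxL⟩ ε).Nonempty ∧
    ∀ w ∈ recCone (clco (⋃ t, eSubdiff (fun y : L => f t y) ⟨x, hxL⟩ ε)),
      ∃ v ∈ recCone (clco (⋃ t, eSubdiff (f t) x ε)),
        ∀ l : L, ⟪v, (l : E n)⟫ = ⟪w, l⟫ := by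
  have hfx : ∀ t, f t x ≠ ⊤ := fun t h => hx (top_le_iff.1 (h ▸ le_iSup (fun t => f t x) t))
  have hproj : ∀ a ∈ ⋃ t, eSubdiff (f t) x ε,
      L.orthogonalProjectionOnto a ∈ ⋃ t, eSubdiff (fun y : L => f t y) ⟨x, hxL⟩ ε := by
    simp only [mem_iUnion]
    rintro a ⟨t, ha⟩
    exact ⟨t, orthogonalProjectionOnto_mem_eSubdiff hxL ha⟩
  have hlift : ∀ b ∈ ⋃ t, eSubdiff (fun y : L => f t y) ⟨x, hxL⟩ ε, ∀ u ∈ Lᗮ,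
      (b : E n) + u ∈ ⋃ t, eSubdiff (f t) x ε := by
    simp only [mem_iUnion]
    rintro b ⟨t, hb⟩ u hu
    exact ⟨t, add_mem_eSubdiff_of_mem_orthogonal hxL (hdomL t) hb hu⟩
  obtain ⟨t₀⟩ := ‹Nonempty T›
  obtain ⟨a₀, ha₀t⟩ := eSubdiff_nonempty (hlsc t₀) (hprop t₀).1 (hconv t₀) hε (hfx t₀)
  have ha₀ : a₀ ∈ ⋃ t, eSubdiff (f t) x ε := mem_iUnion.2 ⟨t₀, ha₀t⟩
  have hB : (⋃ t, eSubdiff (fun y : L => f t y) ⟨x, hxL⟩ ε).Nonempty := ⟨_, hproj a₀ ha₀⟩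
  exact ⟨⟨a₀, ha₀⟩, hB, fun w hw =>
    ⟨w, coe_mem_recCone_clco hB hproj hlift hw, fun l => (L.coe_inner w l).symm⟩⟩

/-- restriction of recession cones to finite-dimensional subspaces. -/
theorem stmt11 {n : ℕ} {T : Type*} [Nonempty T] (f : T → E n → EReal)
    (hlsc : ∀ t, LowerSemicontinuous (f t)) (hprop : ∀ t, EProper (f t))
    (hconv : ∀ t, EpiConvex (f t)) (ε : ℝ) (hε : 0 < ε)
    (x : E n) (hx : (⨆ t, f t x) ≠ ⊤)
    (L : Submodule ℝ (E n)) (hL : FiniteDimensional ℝ L) (hxL : x ∈ L)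
    (hdomL : ∀ t, {y | f t y ≠ ⊤} ⊆ (L : Set (E n))) :
    (⋃ t, eSubdiff (f t) x ε).Nonempty ∧
    (⋃ t, eSubdiff (fun y : L => f t y) ⟨x, hxL⟩ ε).Nonempty ∧
    ∀ w ∈ recCone (clco (⋃ t, eSubdiff (fun y : L => f t y) ⟨x, hxL⟩ ε)),
      ∃ v ∈ recCone (clco (⋃ t, eSubdiff (f t) x ε)),
        ∀ l : L, ⟪v, (l : E n)⟫ = ⟪w, l⟫ :=
  stmt11_general f hlsc hprop hconv ε hε x hx L hxL hdomL
end
end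

section
/- (Normal cone at the supremum domain, affine case.) Let a_t ∈ X*, b_t ∈ ℝ for t ∈ T and f := sup_t (⟨a_t, ·⟩ − b_t). Let x ∈ dom f with inf_{t∈T}(⟨a_t, x⟩ − b_t) > −∞. Then N_{dom f}(x) = [cl co{a_t : t ∈ T}]_∞. -/
open Set
open scoped RealInnerProductSpace Pointwise

noncomputable section

lemma ereal_isup_ne_top_iff {T : Type*} (r : T → ℝ) :
    (⨆ t, ((r t : ℝ) : EReal)) ≠ ⊤ ↔ ∃ M : ℝ, ∀ t, r t ≤ M := by
  constructor
  · intro h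
    cases isEmpty_or_nonempty T with
    | inl hT => exact ⟨0, fun t => (hT.false t).elim⟩
    | inr hT =>
      set S := ⨆ t, ((r t : ℝ) : EReal) with hSdef
      have hS : ∀ t, ((r t : ℝ) : EReal) ≤ S := fun t => le_iSup (fun t => ((r t : ℝ) : EReal)) t
      have hbot : S ≠ ⊥ := by
        obtain ⟨t⟩ := hT
        intro hb
        have := hS t
        rw [hb] at this
        simp at this
      refine ⟨S.toReal, fun t => ?_⟩
      have h1 := hS t
      rw [← EReal.coe_toReal h hbot] at h1
      exact_mod_cast h1
  · rintro ⟨M, hM⟩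
    have h1 : (⨆ t, ((r t : ℝ) : EReal)) ≤ (M : EReal) :=
      iSup_le fun t => by exact_mod_cast hM t
    exact ne_top_of_le_ne_top (by simp) h1

lemma sep_closed_point {n : ℕ} {C : Set (E n)} (hconv : Convex ℝ C) (hcl : IsClosed C)
    {p : E n} (hp : p ∉ C) : ∃ u : E n, ∃ α : ℝ, (∀ c ∈ C, ⟪c, u⟫ < α) ∧ α < ⟪p, u⟫ := by
  obtain ⟨f, α, hfc, hfp⟩ := geometric_hahn_banach_closed_point hconv hcl hp
  refine ⟨(InnerProductSpace.toDual ℝ (E n)).symm f, α, fun c hc => ?_, ?_⟩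
  · rw [real_inner_comm, InnerProductSpace.toDual_symm_apply]; exact hfc c hc
  · rw [real_inner_comm, InnerProductSpace.toDual_symm_apply]; exact hfp

lemma clco_bound {n : ℕ} {A : Set (E n)} {u : E n} {M : ℝ}
    (h : ∀ z ∈ A, ⟪z, u⟫ ≤ M) : ∀ c ∈ clco A, ⟪c, u⟫ ≤ M := by
  have hlin : IsLinearMap ℝ (fun z : E n => ⟪z, u⟫) :=
    ⟨fun z w => inner_add_left z w u, fun c z => real_inner_smul_left z u c⟩
  have hconv : Convex ℝ {z : E n | ⟪z, u⟫ ≤ M} := convex_halfSpace_le hlin M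
  have h1 : convexHull ℝ A ⊆ {z : E n | ⟪z, u⟫ ≤ M} := convexHull_min h hconv
  have hclosed : IsClosed {z : E n | ⟪z, u⟫ ≤ M} :=
    isClosed_le (Continuous.inner continuous_id continuous_const) continuous_const
  exact fun c hc => closure_minimal h1 hclosed hc

lemma recCone_char {n : ℕ} {C : Set (E n)} (hne : C.Nonempty) (hconv : Convex ℝ C)
    (hcl : IsClosed C) (d : E n) :
    d ∈ recCone C ↔ ∀ u : E n, (∃ M, ∀ c ∈ C, ⟪c, u⟫ ≤ M) → ⟪d, u⟫ ≤ 0 := by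
  constructor
  · rintro (⟨hempty, _⟩ | ⟨_, hd⟩)
    · exact absurd hempty hne.ne_empty
    · rintro u ⟨M, hM⟩
      obtain ⟨c0, hc0⟩ := hne
      have hk : ∀ k : ℕ, c0 + (k : ℝ) • d ∈ C := by
        intro k; induction k with
        | zero => simpa using hc0
        | succ k ih =>
          have h2 := hd _ ih
          convert h2 using 1
          push_cast
          module
      by_contra hpos
      push_neg at hpos
      obtain ⟨k, hkgt⟩ := exists_nat_gt ((M - ⟪c0, u⟫) / ⟪d, u⟫)
      have h1 := hM _ (hk k)
      rw [inner_add_left, real_inner_smul_left] at h1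
      have h3 := (div_lt_iff₀ hpos).mp hkgt
      linarith
  · intro h
    refine Or.inr ⟨hne, fun c hc => ?_⟩
    by_contra hcd
    obtain ⟨u, α, hlt, hgt⟩ := sep_closed_point hconv hcl hcd
    have h1 : ⟪d, u⟫ ≤ 0 := h u ⟨α, fun z hz => (hlt z hz).le⟩
    have h2 := hlt c hc
    rw [inner_add_left] at hgt
    linarith


/-- normal cone to the domain of a supremum of affine functions, under
`inf_t (⟨a_t, x⟩ − b_t) > −∞`: `N_{dom f}(x) = [cl co {a_t}]_∞`. -/
theorem stmt16 {n : ℕ} {T : Type*} (a : T → E n) (b : T → ℝ) (x : E n)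
    (hx : (⨆ t, ((⟪a t, x⟫ - b t : ℝ) : EReal)) ≠ ⊤)
    (hbdd : ∃ m : ℝ, ∀ t, m ≤ ⟪a t, x⟫ - b t) :
    eNormal {y | (⨆ t, ((⟪a t, y⟫ - b t : ℝ) : EReal)) ≠ ⊤} x 0 =
      recCone (clco (Set.range a)) := by
  cases isEmpty_or_nonempty T with
  | inl hT =>
    have hD : {y : E n | (⨆ t, ((⟪a t, y⟫ - b t : ℝ) : EReal)) ≠ ⊤} = univ := by
      ext y; simp [iSup_of_empty]
    have hA : Set.range a = ∅ := range_eq_empty a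
    rw [hD, hA]
    ext v
    simp only [eNormal, mem_setOf_eq, mem_univ, forall_true_left, recCone, clco,
      convexHull_empty, closure_empty]
    constructor
    · intro h
      have h1 := h (x + v)
      rw [add_sub_cancel_left] at h1
      left
      exact ⟨trivial, by rwa [← real_inner_self_nonpos]⟩
    · rintro (⟨-, rfl⟩ | ⟨⟨z, hz⟩, -⟩)
      · intro y; simp
      · exact absurd hz (notMem_empty z)
  | inr hT =>
    obtain ⟨M0, hM0⟩ := (ereal_isup_ne_top_iff _).mp hx
    obtain ⟨m, hm⟩ := hbdd
    have hsub : Set.range a ⊆ clco (Set.range a) :=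
      subset_closure.trans' (subset_convexHull ℝ _)
    have hCne : (clco (Set.range a)).Nonempty :=
      ⟨a (Classical.arbitrary T), hsub (mem_range_self _)⟩
    have hCconv : Convex ℝ (clco (Set.range a)) := (convex_convexHull ℝ _).closure
    have hCcl : IsClosed (clco (Set.range a)) := isClosed_closure
    ext v
    simp only [recCone_char hCne hCconv hCcl, eNormal, mem_setOf_eq]
    constructor
    · rintro hv u ⟨M, hM⟩
      have hM' : ∀ t, ⟪a t, u⟫ ≤ M := fun t => hM _ (hsub (mem_range_self t))
      have hy : (⨆ t, ((⟪a t, x + u⟫ - b t : ℝ) : EReal)) ≠ ⊤ := by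
        rw [ereal_isup_ne_top_iff]
        refine ⟨M + M0, fun t => ?_⟩
        have := hM' t
        have := hM0 t
        rw [inner_add_right]
        linarith
      have h1 := hv (x + u) hy
      rwa [add_sub_cancel_left] at h1
    · intro hv y hy
      obtain ⟨M1, hM1⟩ := (ereal_isup_ne_top_iff _).mp hy
      refine hv (y - x) ⟨M1 - m, clco_bound ?_⟩
      rintro z ⟨t, rfl⟩
      have h1 := hM1 t
      have h2 := hm t
      rw [inner_sub_right]
      linarith
end
end

section
/- (One-dimensional counterexample showing weights are necessary.) Let f_t(x) = t·x − t for t ∈ T = [0, ∞), so that f := sup_{t≥0} f_t = I_{(−∞,1]} (the indicator of (−∞,1]). Then for every ε > 0: (i) ∂_ε f_t(0) = {t} for all t ≥ 0, (ii) [cl co(⋃_{t≥0} ∂_ε f_t(0))]_∞ = ℝ₊, but (iii) N_{dom f}(0) = {0}; hence the unweighted recession-cone formula for the normal cone fails at x = 0. Moreover the weighted set cl co([0, ε] ∪ {εt/(2t − ε) : t > ε}) is bounded, so its recession cone is {0} = N_{dom f}(0). -/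
open Set
open scoped RealInnerProductSpace Pointwise

noncomputable section

lemma clco_eq {C : Set ℝ} (h : Convex ℝ C) (h2 : IsClosed C) : clco C = C := by
  rw [clco, h.convexHull_eq, h2.closure_eq]

/-- one-dimensional counterexample: with `f_t(y) = t y − t`, `t ≥ 0`,
`f = I_{(−∞,1]}`, the unweighted recession-cone formula fails at `x = 0`, while the
weighted set is bounded with recession cone `{0} = N_{dom f}(0)`. -/
theorem stmt17 (ε : ℝ) (hε : 0 < ε) :
    (∀ t : ℝ, 0 ≤ t →
      eSubdiff (fun y : ℝ => ((t * y - t : ℝ) : EReal)) 0 ε = {t}) ∧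
    recCone (clco (⋃ t ∈ Set.Ici (0 : ℝ),
      eSubdiff (fun y : ℝ => ((t * y - t : ℝ) : EReal)) 0 ε)) = Set.Ici 0 ∧
    eNormal (Set.Iic (1 : ℝ)) 0 0 = {0} ∧
    Bornology.IsBounded
      (clco (Set.Icc (0 : ℝ) ε ∪ {r : ℝ | ∃ t > ε, r = ε * t / (2 * t - ε)})) ∧
    recCone
      (clco (Set.Icc (0 : ℝ) ε ∪ {r : ℝ | ∃ t > ε, r = ε * t / (2 * t - ε)})) = {0} := by
  have h1 : ∀ t : ℝ, 0 ≤ t →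
      eSubdiff (fun y : ℝ => ((t * y - t : ℝ) : EReal)) 0 ε = {t} := by
    intro t ht
    ext v
    simp only [eSubdiff, mem_setOf_eq, mem_singleton_iff]
    constructor
    · rintro ⟨-, hineq⟩
      by_contra hv
      have key : ∀ y : ℝ, (v - t) * y ≤ ε := by
        intro y
        have := hineq y
        simp only [RCLike.inner_apply, conj_trivial, sub_zero, ← EReal.coe_add,
          EReal.coe_le_coe_iff] at this
        nlinarith [this]
      have := key (2 * ε / (v - t))
      have hvt : v - t ≠ 0 := sub_ne_zero.mpr hv
      rw [mul_div_cancel₀ _ hvt] at this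
      linarith
    · rintro rfl
      refine ⟨⟨v * 0 - v, rfl⟩, fun y => ?_⟩
      simp only [RCLike.inner_apply, conj_trivial, sub_zero, ← EReal.coe_add,
        EReal.coe_le_coe_iff]
      nlinarith
  refine ⟨h1, ?_, ?_, ?_, ?_⟩
  · have hU : (⋃ t ∈ Set.Ici (0 : ℝ),
        eSubdiff (fun y : ℝ => ((t * y - t : ℝ) : EReal)) 0 ε) = Set.Ici 0 := by
      ext v
      simp only [mem_iUnion, mem_Ici, exists_prop]
      constructor
      · rintro ⟨t, ht, hv⟩
        rw [h1 t ht] at hv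
        exact hv ▸ ht
      · intro hv
        exact ⟨v, hv, by rw [h1 v hv]; rfl⟩
    rw [hU, clco_eq (convex_Ici 0) isClosed_Ici]
    ext d
    simp only [recCone, mem_setOf_eq, mem_Ici]
    constructor
    · rintro (⟨h, -⟩ | ⟨-, h⟩)
      · exact absurd h (Nonempty.ne_empty (nonempty_Ici))
      · have := h 0 le_rfl
        simpa using this
    · intro hd
      exact Or.inr ⟨nonempty_Ici, fun a ha => by simp only [mem_Ici] at *; linarith⟩
  · ext v
    simp only [eNormal, mem_setOf_eq, mem_Iic, mem_singleton_iff, RCLike.inner_apply,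
      conj_trivial, sub_zero]
    constructor
    · intro h
      have h1' := h 1 le_rfl
      have h2' := h (-1) (by norm_num)
      nlinarith
    · rintro rfl y _; simp
  all_goals {
    have hS : {r : ℝ | ∃ t > ε, r = ε * t / (2 * t - ε)} ⊆ Set.Icc 0 ε := by
      rintro r ⟨t, ht, rfl⟩
      have h2t : 0 < 2 * t - ε := by linarith
      constructor
      · exact div_nonneg (by nlinarith) h2t.le
      · rw [div_le_iff₀ h2t]; nlinarith
    have hA : Set.Icc (0:ℝ) ε ∪ {r : ℝ | ∃ t > ε, r = ε * t / (2 * t - ε)} = Set.Icc 0 ε :=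
      union_eq_left.mpr hS
    rw [hA, clco_eq (convex_Icc 0 ε) isClosed_Icc]
    first
    | exact Metric.isBounded_Icc 0 ε
    | { ext d
        simp only [recCone, mem_setOf_eq, mem_singleton_iff]
        constructor
        · rintro (⟨h, hd⟩ | ⟨-, h⟩)
          · exact hd
          · have h0 := h 0 ⟨le_rfl, le_of_lt hε⟩
            have hε' := h ε ⟨le_of_lt hε, le_rfl⟩
            simp only [mem_Icc, zero_add] at h0 hε'
            linarith
        · rintro rfl
          exact Or.inr ⟨⟨0, le_rfl, le_of_lt hε⟩, fun a ha => by simpa using ha⟩ }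
  }
end
end
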